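/- The relaxed stochastic order is transitive on sets of symmetric distributions with continuous quantile functions; in fact, for symmetric distributions F and G with continuous quantile functions, F ≥_rS G holds if and only if the medians satisfy F^{-1}(1/2) ≥ G^{-1}(1/2). -/

import Mathlib

/-!
By symmetry the two differences `qF τ - qG τ` and `qF (1 - τ) - qG (1 - τ)` add up to
`2 (m_F - m_G)`, so their maximum is at least `m_F - m_G`; conversely, as `τ ↓ 1/2` both tend
to `m_F - m_G` by continuity, so `F ≥_rS G` forces `m_F ≥ m_G`. Hence `≥_rS` is the order of
the medians, which is transitive.
-/

/-- `F ≥_rS G`: the relaxed stochastic order in terms of quantile functions. -/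
def RelaxedStochOrder (qF qG : ℝ → ℝ) : Prop :=
  ∀ τ : ℝ, 1 / 2 < τ → τ < 1 →
    0 ≤ max (qF τ - qG τ) (qF (1 - τ) - qG (1 - τ))

open Filter Set Topology

lemma relaxedStochOrder_of_median_le {qF qG : ℝ → ℝ}
    (hFsym : ∀ τ ∈ Ioo (0:ℝ) 1, qF τ = 2 * qF (1 / 2) - qF (1 - τ))
    (hGsym : ∀ τ ∈ Ioo (0:ℝ) 1, qG τ = 2 * qG (1 / 2) - qG (1 - τ))
    (hmed : qG (1 / 2) ≤ qF (1 / 2)) : RelaxedStochOrder qF qG := by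
  intro τ hτ₁ hτ₂
  have hτ : τ ∈ Ioo (0:ℝ) 1 := ⟨by linarith, hτ₂⟩
  have hsum : (qF τ - qG τ) + (qF (1 - τ) - qG (1 - τ)) = 2 * (qF (1 / 2) - qG (1 / 2)) := by
    rw [hFsym τ hτ, hGsym τ hτ]; ring
  rcases le_total (qF τ - qG τ) (qF (1 - τ) - qG (1 - τ)) with h | h
  · rw [max_eq_right h]; linarith
  · rw [max_eq_left h]; linarith

lemma median_le_of_relaxedStochOrder {qF qG : ℝ → ℝ}
    (hFc : ContinuousAt qF (1 / 2)) (hGc : ContinuousAt qG (1 / 2))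
    (h : RelaxedStochOrder qF qG) : qG (1 / 2) ≤ qF (1 / 2) := by
  have hreflect : ContinuousAt (fun τ : ℝ => 1 - τ) (1 / 2) := by fun_prop
  have hhalf : (1:ℝ) - 1 / 2 = 1 / 2 := by norm_num
  have hcont : ContinuousAt
      (fun τ => max (qF τ - qG τ) (qF (1 - τ) - qG (1 - τ))) (1 / 2) :=
    (hFc.sub hGc).max
      ((hFc.comp_of_eq hreflect hhalf).sub (hGc.comp_of_eq hreflect hhalf))
  have hnonneg : ∀ᶠ τ in 𝓝[>] (1 / 2 : ℝ),
      0 ≤ max (qF τ - qG τ) (qF (1 - τ) - qG (1 - τ)) := by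
    filter_upwards [Ioo_mem_nhdsGT (by norm_num : (1 / 2 : ℝ) < 1)] with τ hτ
    exact h τ hτ.1 hτ.2
  have hlim := ge_of_tendsto (hcont.tendsto.mono_left nhdsWithin_le_nhds) hnonneg
  simp only [hhalf, max_self] at hlim
  linarith

theorem relaxed_stochastic_symmetric_general (qF qG qH : ℝ → ℝ)
    (hFc : ContinuousOn qF (Set.Ioo 0 1)) (hGc : ContinuousOn qG (Set.Ioo 0 1))
    (hHc : ContinuousOn qH (Set.Ioo 0 1))
    (hFsym : ∀ τ ∈ Set.Ioo (0:ℝ) 1, qF τ = 2 * qF (1 / 2) - qF (1 - τ))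
    (hGsym : ∀ τ ∈ Set.Ioo (0:ℝ) 1, qG τ = 2 * qG (1 / 2) - qG (1 - τ))
    (hHsym : ∀ τ ∈ Set.Ioo (0:ℝ) 1, qH τ = 2 * qH (1 / 2) - qH (1 - τ)) :
    (RelaxedStochOrder qF qG → RelaxedStochOrder qG qH →
      RelaxedStochOrder qF qH) ∧
    (RelaxedStochOrder qF qG ↔ qG (1 / 2) ≤ qF (1 / 2)) := by
  have hmem : Ioo (0:ℝ) 1 ∈ 𝓝 (1 / 2) := Ioo_mem_nhds (by norm_num) (by norm_num)
  have hF := hFc.continuousAt hmem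
  have hG := hGc.continuousAt hmem
  have hH := hHc.continuousAt hmem
  refine ⟨fun hFG hGH => ?_, ⟨median_le_of_relaxedStochOrder hF hG,
    relaxedStochOrder_of_median_le hFsym hGsym⟩⟩
  exact relaxedStochOrder_of_median_le hFsym hHsym
    ((median_le_of_relaxedStochOrder hG hH hGH).trans (median_le_of_relaxedStochOrder hF hG hFG))

/-- On symmetric distributions with continuous quantile functions, the relaxed
stochastic order is transitive; in fact `F ≥_rS G` iff the medians satisfy
`F⁻¹(1/2) ≥ G⁻¹(1/2)`. -/
theorem relaxed_stochastic_symmetric (qF qG qH : ℝ → ℝ)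
    (hF : MonotoneOn qF (Set.Ioo 0 1)) (hG : MonotoneOn qG (Set.Ioo 0 1))
    (hH : MonotoneOn qH (Set.Ioo 0 1))
    (hFc : ContinuousOn qF (Set.Ioo 0 1)) (hGc : ContinuousOn qG (Set.Ioo 0 1))
    (hHc : ContinuousOn qH (Set.Ioo 0 1))
    (hFsym : ∀ τ ∈ Set.Ioo (0:ℝ) 1, qF τ = 2 * qF (1 / 2) - qF (1 - τ))
    (hGsym : ∀ τ ∈ Set.Ioo (0:ℝ) 1, qG τ = 2 * qG (1 / 2) - qG (1 - τ))
    (hHsym : ∀ τ ∈ Set.Ioo (0:ℝ) 1, qH τ = 2 * qH (1 / 2) - qH (1 - τ)) :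
    (RelaxedStochOrder qF qG → RelaxedStochOrder qG qH →
      RelaxedStochOrder qF qH) ∧
    (RelaxedStochOrder qF qG ↔ qG (1 / 2) ≤ qF (1 / 2)) :=
  relaxed_stochastic_symmetric_general qF qG qH hFc hGc hHc hFsym hGsym hHsym
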